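/- (Proposition 1, O(1/t) decay of the Hamiltonian) Under Assumptions 1 and 2, suppose there exist positive constants α̲ and ᾱ such that along the trajectory q(t) one has α̲ Ψ(q(t)) ≤ ‖∇Ψ(q(t))‖² ≤ ᾱ Ψ(q(t)) for all t ≥ t₀. Then there exists a positive constant λ, depending only on K, L, α̲ and ᾱ, such that the energy H(t) = (1/2)‖q̇(t)‖² + Ψ(q(t)) satisfies H(t) ≤ (λ/(t − t₀)) H(t₀) for all t > t₀. -/

import Mathlib

/-!
Along the flow the energy `H = ½‖q̇‖² + Ψ(q)` only dissipates through the velocity,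
`H' = -K‖q̇‖²`. Tilting it by the cross term gives `V = H + ε⟪q̇, ∇Ψ(q)⟫`, whose derivative
also contains `-ε‖∇Ψ(q)‖²`; for small `ε` the Lipschitz bound on `∇Ψ` and the lower gradient
bound `α̲ Ψ ≤ ‖∇Ψ‖²` turn this into `V' ≤ -μ H`, while the upper gradient bound makes `V`
comparable to `H`, `½ H ≤ V ≤ (3/2) H`. Grönwall then gives `H(t) ≤ 3 H(t₀) e^{-2μ(t - t₀)/3}`,
and `e^{-x} ≤ 1/x` gives the `O(1/t)` rate.
-/

open Real
open scoped RealInnerProductSpace Gradient NNReal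

section Calculus

variable {E : Type*} [NormedAddCommGroup E] [InnerProductSpace ℝ E]

theorem LipschitzWith.inner_fderiv_le {f : E → E} {Lf : ℝ≥0} (hf : LipschitzWith Lf f)
    (x v : E) : ⟪v, fderiv ℝ f x v⟫ ≤ Lf * ‖v‖ ^ 2 :=
  calc ⟪v, fderiv ℝ f x v⟫ ≤ ‖v‖ * ‖fderiv ℝ f x v‖ := real_inner_le_norm _ _
    _ ≤ ‖v‖ * (Lf * ‖v‖) := by
        gcongr
        exact (ContinuousLinearMap.le_opNorm _ _).trans
          (by gcongr; exact norm_fderiv_le_of_lipschitz ℝ hf)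
    _ = Lf * ‖v‖ ^ 2 := by ring

variable [CompleteSpace E]

theorem ContDiff.gradient {Ψ : E → ℝ} {m n : WithTop ℕ∞} (hΨ : ContDiff ℝ n Ψ)
    (hmn : m + 1 ≤ n) : ContDiff ℝ m (∇ Ψ) :=
  (InnerProductSpace.toDual ℝ E).symm.toContinuousLinearEquiv.contDiff.comp
    (hΨ.fderiv_right hmn)

theorem HasGradientAt.comp_hasDerivAt {Ψ : E → ℝ} {g v : E} {q : ℝ → E} {t : ℝ}
    (hΨ : HasGradientAt Ψ g (q t)) (hq : HasDerivAt q v t) :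
    HasDerivAt (fun s => Ψ (q s)) ⟪g, v⟫ t := by
  simpa [Function.comp_def] using hΨ.hasFDerivAt.comp_hasDerivAt t hq

end Calculus

theorem le_mul_exp_of_hasDerivAt_le_mul {f f' : ℝ → ℝ} {k a t : ℝ}
    (hf : ∀ s, a ≤ s → HasDerivAt f (f' s) s) (hbound : ∀ s, a ≤ s → f' s ≤ k * f s)
    (ht : a ≤ t) : f t ≤ f a * exp (k * (t - a)) := by
  rw [← gronwallBound_ε0]
  refine le_gronwallBound_of_liminf_deriv_right_le (f' := f') (b := t) ?_ ?_ le_rfl ?_ t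
    ⟨ht, le_rfl⟩
  · exact fun s hs => (hf s hs.1).continuousAt.continuousWithinAt
  · exact fun s hs r hr => (hf s hs.1).hasDerivWithinAt.liminf_right_slope_le hr
  · simpa using fun s hs _ => hbound s hs

theorem Real.exp_neg_le_inv {x : ℝ} (hx : 0 < x) : exp (-x) ≤ x⁻¹ := by
  rw [exp_neg]
  exact inv_anti₀ hx (by linarith [add_one_le_exp x])

namespace DampedGradientSystem

variable {E : Type*} [NormedAddCommGroup E]

noncomputable def energy (Ψ : E → ℝ) (x v : E) : ℝ := 1 / 2 * ‖v‖ ^ 2 + Ψ x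

theorem energy_nonneg {Ψ : E → ℝ} {x : E} (hΨ : 0 ≤ Ψ x) (v : E) : 0 ≤ energy Ψ x v := by
  unfold energy; positivity

variable [InnerProductSpace ℝ E] [CompleteSpace E]

noncomputable def lyapunov (Ψ : E → ℝ) (ε : ℝ) (x v : E) : ℝ := energy Ψ x v + ε * ⟪v, ∇ Ψ x⟫

/-- The derivative of `lyapunov Ψ ε` along a solution of `q̈ + K q̇ + ∇Ψ(q) = 0`
passing through `(x, v)`. -/
noncomputable def lyapunovDeriv (Ψ : E → ℝ) (K ε : ℝ) (x v : E) : ℝ :=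
  -K * ‖v‖ ^ 2 + ε * (⟪v, fderiv ℝ (∇ Ψ) x v⟫ - K * ⟪v, ∇ Ψ x⟫ - ‖∇ Ψ x‖ ^ 2)

section Pointwise

variable {Ψ : E → ℝ} {x v : E} {c ε : ℝ}

theorem abs_inner_gradient_le_mul_energy (hc : 1 ≤ c) (hgrad : ‖∇ Ψ x‖ ^ 2 ≤ c * Ψ x) :
    |⟪v, ∇ Ψ x⟫| ≤ c * energy Ψ x v := by
  have hamgm : ‖v‖ * ‖∇ Ψ x‖ ≤ 1 / 2 * ‖v‖ ^ 2 + 1 / 2 * ‖∇ Ψ x‖ ^ 2 := by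
    nlinarith [sq_nonneg (‖v‖ - ‖∇ Ψ x‖)]
  have hv : ‖v‖ ^ 2 ≤ c * ‖v‖ ^ 2 := le_mul_of_one_le_left (by positivity) hc
  unfold energy
  nlinarith [abs_real_inner_le_norm v (∇ Ψ x)]

theorem abs_lyapunov_sub_energy_le (hΨ : 0 ≤ Ψ x) (hc : 1 ≤ c)
    (hgrad : ‖∇ Ψ x‖ ^ 2 ≤ c * Ψ x) (hε : 0 ≤ ε) (hεc : ε * c ≤ 1 / 2) :
    |lyapunov Ψ ε x v - energy Ψ x v| ≤ 1 / 2 * energy Ψ x v :=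
  calc |lyapunov Ψ ε x v - energy Ψ x v| = ε * |⟪v, ∇ Ψ x⟫| := by
        rw [lyapunov, add_sub_cancel_left, abs_mul, abs_of_nonneg hε]
    _ ≤ ε * (c * energy Ψ x v) := by
        gcongr; exact abs_inner_gradient_le_mul_energy hc hgrad
    _ ≤ 1 / 2 * energy Ψ x v := by
        rw [← mul_assoc]; gcongr; exact energy_nonneg hΨ v

theorem lyapunovDeriv_le_neg_mul_energy {Lg : ℝ≥0} {K αlo μ : ℝ} (hL : LipschitzWith Lg (∇ Ψ))
    (hΨ : 0 ≤ Ψ x) (hlo : αlo * Ψ x ≤ ‖∇ Ψ x‖ ^ 2) (hε : 0 ≤ ε)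
    (hεK : ε * (2 * Lg + K ^ 2) ≤ K) (hμK : μ ≤ K) (hμε : μ ≤ ε * αlo / 2) :
    lyapunovDeriv Ψ K ε x v ≤ -μ * energy Ψ x v := by
  have hcurv := hL.inner_fderiv_le x v
  have hcross : -(K * ⟪v, ∇ Ψ x⟫) ≤ K ^ 2 / 2 * ‖v‖ ^ 2 + 1 / 2 * ‖∇ Ψ x‖ ^ 2 :=
    calc -(K * ⟪v, ∇ Ψ x⟫) ≤ |K| * |⟪v, ∇ Ψ x⟫| := by rw [← abs_mul]; exact neg_le_abs _
      _ ≤ |K| * (‖v‖ * ‖∇ Ψ x‖) := by gcongr; exact abs_real_inner_le_norm _ _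
      _ ≤ K ^ 2 / 2 * ‖v‖ ^ 2 + 1 / 2 * ‖∇ Ψ x‖ ^ 2 := by
        nlinarith [sq_nonneg (|K| * ‖v‖ - ‖∇ Ψ x‖), sq_abs K]
  have hhalf : lyapunovDeriv Ψ K ε x v ≤ -(K / 2) * ‖v‖ ^ 2 - ε / 2 * ‖∇ Ψ x‖ ^ 2 := by
    unfold lyapunovDeriv
    nlinarith [mul_le_mul_of_nonneg_left hcurv hε, mul_le_mul_of_nonneg_left hcross hε]
  unfold energy
  nlinarith [mul_le_mul_of_nonneg_left hlo hε, sq_nonneg ‖v‖]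

end Pointwise

section Trajectory

variable {Ψ : E → ℝ} {q qv qa : ℝ → E} {K ε : ℝ}

theorem hasDerivAt_energy {t : ℝ} (hΨ : DifferentiableAt ℝ Ψ (q t))
    (hq : HasDerivAt q (qv t) t) (hqv : HasDerivAt qv (qa t) t) :
    HasDerivAt (fun s => energy Ψ (q s) (qv s)) (⟪qv t, qa t⟫ + ⟪∇ Ψ (q t), qv t⟫) t := by
  unfold energy
  exact ((hqv.norm_sq.const_mul (1 / 2 : ℝ)).add
    (hΨ.hasGradientAt.comp_hasDerivAt hq)).congr_deriv (by ring)

theorem hasDerivAt_inner_gradient {t : ℝ} (hΨ : DifferentiableAt ℝ (∇ Ψ) (q t))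
    (hq : HasDerivAt q (qv t) t) (hqv : HasDerivAt qv (qa t) t) :
    HasDerivAt (fun s => ⟪qv s, ∇ Ψ (q s)⟫)
      (⟪qv t, fderiv ℝ (∇ Ψ) (q t) (qv t)⟫ + ⟪qa t, ∇ Ψ (q t)⟫) t :=
  hqv.inner ℝ (hΨ.hasFDerivAt.comp_hasDerivAt t hq)

theorem hasDerivAt_lyapunov {t : ℝ} (hΨ : ContDiff ℝ 2 Ψ) (hq : HasDerivAt q (qv t) t)
    (hqv : HasDerivAt qv (qa t) t) (heq : qa t + K • qv t + ∇ Ψ (q t) = 0) :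
    HasDerivAt (fun s => lyapunov Ψ ε (q s) (qv s)) (lyapunovDeriv Ψ K ε (q t) (qv t)) t := by
  have hqa : qa t = -(K • qv t) - ∇ Ψ (q t) := by
    rw [eq_sub_iff_add_eq, eq_neg_iff_add_eq_zero, ← heq]; abel
  unfold lyapunov
  refine ((hasDerivAt_energy (hΨ.differentiable (by norm_num) _) hq hqv).add
    ((hasDerivAt_inner_gradient ((hΨ.gradient (m := 1) le_rfl).differentiable one_ne_zero _)
      hq hqv).const_mul ε)).congr_deriv ?_
  simp only [lyapunovDeriv, hqa, inner_sub_left, inner_sub_right, inner_neg_left,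
    inner_neg_right, real_inner_smul_left, real_inner_smul_right, real_inner_self_eq_norm_sq,
    real_inner_comm (qv t)]
  ring

theorem energy_le_mul_exp {Lg : ℝ≥0} {αlo c μ t₀ t : ℝ}
    (hΨ : ContDiff ℝ 2 Ψ) (hΨ0 : ∀ x, 0 ≤ Ψ x) (hL : LipschitzWith Lg (∇ Ψ))
    (hq : ∀ t, HasDerivAt q (qv t) t) (hqv : ∀ t, HasDerivAt qv (qa t) t)
    (heq : ∀ t, qa t + K • qv t + ∇ Ψ (q t) = 0)
    (hgrad : ∀ t, t₀ ≤ t →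
      αlo * Ψ (q t) ≤ ‖∇ Ψ (q t)‖ ^ 2 ∧ ‖∇ Ψ (q t)‖ ^ 2 ≤ c * Ψ (q t))
    (hc : 1 ≤ c) (hε : 0 ≤ ε) (hεK : ε * (2 * Lg + K ^ 2) ≤ K) (hεc : ε * c ≤ 1 / 2)
    (hμ : 0 ≤ μ) (hμK : μ ≤ K) (hμε : μ ≤ ε * αlo / 2) (ht : t₀ ≤ t) :
    energy Ψ (q t) (qv t) ≤
      3 * energy Ψ (q t₀) (qv t₀) * exp (-(2 * μ / 3 * (t - t₀))) := by
  have hcomp (s : ℝ) (hs : t₀ ≤ s) :=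
    abs_le.1 (abs_lyapunov_sub_energy_le (v := qv s) (hΨ0 (q s)) hc (hgrad s hs).2 hε hεc)
  have hdecay : lyapunov Ψ ε (q t) (qv t) ≤
      lyapunov Ψ ε (q t₀) (qv t₀) * exp (-(2 * μ / 3) * (t - t₀)) := by
    refine le_mul_exp_of_hasDerivAt_le_mul
      (fun s _ => hasDerivAt_lyapunov hΨ (hq s) (hqv s) (heq s)) (fun s hs => ?_) ht
    have hrate := lyapunovDeriv_le_neg_mul_energy (v := qv s) hL (hΨ0 (q s)) (hgrad s hs).1
      hε hεK hμK hμε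
    nlinarith [hcomp s hs]
  rw [neg_mul] at hdecay
  have hexp := exp_pos (-(2 * μ / 3 * (t - t₀)))
  nlinarith [hcomp t ht, hcomp t₀ le_rfl]

end Trajectory

theorem exists_lyapunov_parameters (Lg : ℝ≥0) {K c αlo : ℝ} (hK : 0 < K) (hc : 0 < c)
    (hαlo : 0 < αlo) :
    ∃ ε μ : ℝ, 0 ≤ ε ∧ ε * (2 * Lg + K ^ 2) ≤ K ∧ ε * c ≤ 1 / 2 ∧
      0 < μ ∧ μ ≤ K ∧ μ ≤ ε * αlo / 2 := by
  set ε := min (K / (2 * Lg + K ^ 2)) (1 / (2 * c))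
  have hε : 0 < ε := lt_min (by positivity) (by positivity)
  refine ⟨ε, min K (ε * αlo / 2), hε.le, ?_, ?_, lt_min hK (by positivity),
    min_le_left _ _, min_le_right _ _⟩
  · calc ε * (2 * Lg + K ^ 2) ≤ K / (2 * Lg + K ^ 2) * (2 * Lg + K ^ 2) := by
          gcongr; exact min_le_left _ _
      _ = K := by field_simp
  · calc ε * c ≤ 1 / (2 * c) * c := by gcongr; exact min_le_right _ _
      _ = 1 / 2 := by field_simp

end DampedGradientSystem

open DampedGradientSystem

theorem hamiltonian_O_one_over_t_decay_general
    (K L αlo αhi : ℝ) (hK0 : 0 < K)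
    (hαlo : 0 < αlo) :
    ∃ lam : ℝ, 0 < lam ∧
      ∀ (n : ℕ) (Ψ : EuclideanSpace ℝ (Fin n) → ℝ)
        (q qv qa : ℝ → EuclideanSpace ℝ (Fin n)) (t₀ : ℝ),
        ContDiff ℝ 2 Ψ →
        (∀ x, 0 ≤ Ψ x) →
        LipschitzWith (Real.toNNReal L) (gradient Ψ) →
        (∀ t, HasDerivAt q (qv t) t) →
        (∀ t, HasDerivAt qv (qa t) t) →
        (∀ t, qa t + K • qv t + gradient Ψ (q t) = 0) →
        (∀ t, t₀ ≤ t →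
          αlo * Ψ (q t) ≤ ‖gradient Ψ (q t)‖ ^ 2 ∧
          ‖gradient Ψ (q t)‖ ^ 2 ≤ αhi * Ψ (q t)) →
        ∀ t, t₀ < t →
          (1 / 2) * ‖qv t‖ ^ 2 + Ψ (q t) ≤
            (lam / (t - t₀)) * ((1 / 2) * ‖qv t₀‖ ^ 2 + Ψ (q t₀)) := by
  obtain ⟨ε, μ, hε, hεK, hεc, hμ, hμK, hμε⟩ :=
    exists_lyapunov_parameters L.toNNReal (c := max 1 αhi) hK0 (by positivity) hαlo
  refine ⟨9 / (2 * μ), by positivity, ?_⟩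
  intro n Ψ q qv qa t₀ hΨ hΨ0 hL hq hqv heq hgrad t ht
  have hgrad' (s : ℝ) (hs : t₀ ≤ s) :
      αlo * Ψ (q s) ≤ ‖∇ Ψ (q s)‖ ^ 2 ∧ ‖∇ Ψ (q s)‖ ^ 2 ≤ max 1 αhi * Ψ (q s) :=
    ⟨(hgrad s hs).1, (hgrad s hs).2.trans (by gcongr; exacts [hΨ0 _, le_max_right _ _])⟩
  have hrate : 0 < 2 * μ / 3 * (t - t₀) := by have := sub_pos.2 ht; positivity
  change energy Ψ (q t) (qv t) ≤ 9 / (2 * μ) / (t - t₀) * energy Ψ (q t₀) (qv t₀)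
  calc energy Ψ (q t) (qv t)
      ≤ 3 * energy Ψ (q t₀) (qv t₀) * exp (-(2 * μ / 3 * (t - t₀))) :=
        energy_le_mul_exp hΨ hΨ0 hL hq hqv heq hgrad' (le_max_left _ _) hε hεK hεc hμ.le hμK
          hμε ht.le
    _ ≤ 3 * energy Ψ (q t₀) (qv t₀) * (2 * μ / 3 * (t - t₀))⁻¹ := by
        have := energy_nonneg (hΨ0 (q t₀)) (qv t₀)
        gcongr
        exact exp_neg_le_inv hrate
    _ = 9 / (2 * μ) / (t - t₀) * energy Ψ (q t₀) (qv t₀) := by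
        field_simp
        ring

/-- Proposition 1, O(1/t) decay of the Hamiltonian: under
Assumptions 1 and 2, if along the trajectory
`α̲ Ψ(q(t)) ≤ ‖∇Ψ(q(t))‖² ≤ ᾱ Ψ(q(t))` for all `t ≥ t₀` with `α̲, ᾱ > 0`, then
there is `λ > 0`, depending only on `K, L, α̲, ᾱ`, such that the energy
`H(t) = (1/2)‖q̇(t)‖² + Ψ(q(t))` satisfies `H(t) ≤ (λ/(t − t₀)) H(t₀)` for all
`t > t₀`. -/
theorem hamiltonian_O_one_over_t_decay
    (K L αlo αhi : ℝ) (hK0 : 0 < K) (hL : 0 < L)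
    (hKL : Real.sqrt (1 / (4 * L)) < K)
    (hαlo : 0 < αlo) (hαhi : 0 < αhi) :
    ∃ lam : ℝ, 0 < lam ∧
      ∀ (n : ℕ) (Ψ : EuclideanSpace ℝ (Fin n) → ℝ)
        (q qv qa : ℝ → EuclideanSpace ℝ (Fin n)) (t₀ : ℝ),
        ContDiff ℝ 2 Ψ →
        (∀ x, 0 ≤ Ψ x) →
        LipschitzWith (Real.toNNReal L) (gradient Ψ) →
        (∀ t, HasDerivAt q (qv t) t) →
        (∀ t, HasDerivAt qv (qa t) t) →
        (∀ t, qa t + K • qv t + gradient Ψ (q t) = 0) →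
        (∀ t, t₀ ≤ t →
          αlo * Ψ (q t) ≤ ‖gradient Ψ (q t)‖ ^ 2 ∧
          ‖gradient Ψ (q t)‖ ^ 2 ≤ αhi * Ψ (q t)) →
        ∀ t, t₀ < t →
          (1 / 2) * ‖qv t‖ ^ 2 + Ψ (q t) ≤
            (lam / (t - t₀)) * ((1 / 2) * ‖qv t₀‖ ^ 2 + Ψ (q t₀)) :=
  hamiltonian_O_one_over_t_decay_general K L αlo αhi hK0 hαlo
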